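/- arXiv:2310.10510 — 3 statements merged into one kernel-verified Lean document; each statement's English description precedes it below -/
import Mathlib

section
/- Let N < p and δ, η, a > 0. For ε > 0 define φ_ε(x) = A_ε e^{-ε|x|} with A_ε chosen so that ‖φ_ε‖_p = a. Then for ε sufficiently small, ∫_{ℝ^N} |∇φ_ε|^p dx - η ∫_{B_δ(0)} |φ_ε|^p dx < 0. -/
/-!
Away from the origin `|∇φ_ε| = ε |φ_ε|`, so `∫ |∇φ_ε|^p ≤ ε^p a^p`. The substitution `x = y / ε`
gives `a^p = A_ε^p ε^{-N} I` with `I = ∫ e^{-p|y|}`, hence `∫ |∇φ_ε|^p ≤ A_ε^p ε^{p-N} I`, while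
`η ∫_{B_δ} |φ_ε|^p ≥ A_ε^p η e^{-pεδ} |B_δ|`. As `ε → 0⁺`, `ε^{p-N} I → 0` because `p > N`, while
`η e^{-pεδ} |B_δ| → η |B_δ| > 0`.
-/

open MeasureTheory Filter Topology Real Metric Module

theorem abs_mul_exp_neg_rpow (B t p : ℝ) : |B * exp (-t)| ^ p = |B| ^ p * exp (-(p * t)) := by
  rw [abs_mul, abs_of_pos (exp_pos _), mul_rpow (abs_nonneg B) (exp_pos _).le, ← exp_mul]
  ring_nf

theorem norm_fderiv_mul_exp_neg_mul_norm_le {E : Type*} [NormedAddCommGroup E]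
    [InnerProductSpace ℝ E] (B : ℝ) {ε : ℝ} (hε : 0 ≤ ε) {x : E} (hx : x ≠ 0) :
    ‖fderiv ℝ (fun y : E => B * exp (-(ε * ‖y‖))) x‖ ≤ ε * |B * exp (-(ε * ‖x‖))| := by
  have hnorm : HasFDerivAt (‖·‖) (fderiv ℝ (‖·‖) x) x :=
    ((contDiffAt_norm ℝ hx).differentiableAt one_ne_zero).hasFDerivAt
  have hprofile : HasDerivAt (fun t => B * exp (-(ε * t))) (B * (exp (-(ε * ‖x‖)) * -ε)) ‖x‖ := by
    simpa using (((hasDerivAt_id ‖x‖).const_mul ε).neg.exp).const_mul B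
  have hφ : HasFDerivAt (fun y : E => B * exp (-(ε * ‖y‖)))
      ((B * (exp (-(ε * ‖x‖)) * -ε)) • fderiv ℝ (‖·‖) x) x :=
    hprofile.comp_hasFDerivAt x hnorm
  rw [hφ.fderiv, norm_smul]
  calc ‖B * (exp (-(ε * ‖x‖)) * -ε)‖ * ‖fderiv ℝ (‖·‖) x‖
      ≤ ‖B * (exp (-(ε * ‖x‖)) * -ε)‖ * 1 := by
        gcongr
        simpa using hnorm.le_of_lipschitz lipschitzWith_one_norm
    _ = ε * |B * exp (-(ε * ‖x‖))| := by
        rw [mul_one, Real.norm_eq_abs, abs_mul, abs_mul, abs_mul, abs_neg, abs_of_nonneg hε]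
        ring

theorem eventually_rpow_mul_lt_mul_exp {q : ℝ} (hq : 0 < q) (C : ℝ) {c : ℝ} (hc : 0 < c)
    (p δ : ℝ) : ∀ᶠ ε in 𝓝[>] 0, ε ^ q * C < c * exp (-(p * (ε * δ))) := by
  have hleft : Tendsto (fun ε : ℝ => ε ^ q * C) (𝓝[>] 0) (𝓝 0) := by
    simpa [zero_rpow hq.ne'] using
      ((continuousAt_rpow_const 0 q (Or.inr hq.le)).tendsto.mul_const C).mono_left
        nhdsWithin_le_nhds
  have hright : Tendsto (fun ε : ℝ => c * exp (-(p * (ε * δ)))) (𝓝[>] 0) (𝓝 c) := by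
    have hcont : Continuous (fun ε : ℝ => c * exp (-(p * (ε * δ)))) := by fun_prop
    simpa using (hcont.tendsto 0).mono_left nhdsWithin_le_nhds
  exact hleft.eventually_lt hright hc

section Integrals

variable {E : Type*} [NormedAddCommGroup E] [MeasurableSpace E]

theorem integral_comp_mul_norm [NormedSpace ℝ E] [BorelSpace E] [FiniteDimensional ℝ E]
    (μ : Measure E) [μ.IsAddHaarMeasure] (f : ℝ → ℝ) {ε : ℝ} (hε : 0 ≤ ε) :
    ∫ x, f (ε * ‖x‖) ∂μ = (ε ^ finrank ℝ E)⁻¹ * ∫ x, f ‖x‖ ∂μ := by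
  simpa [norm_smul, abs_of_nonneg hε] using
    Measure.integral_comp_smul_of_nonneg μ (fun x => f ‖x‖) ε (hR := hε)

theorem integral_abs_mul_exp_neg_mul_norm_rpow [NormedSpace ℝ E] [BorelSpace E]
    [FiniteDimensional ℝ E] (μ : Measure E) [μ.IsAddHaarMeasure] (B p : ℝ) {ε : ℝ} (hε : 0 ≤ ε) :
    ∫ x, |B * exp (-(ε * ‖x‖))| ^ p ∂μ
      = |B| ^ p * ((ε ^ finrank ℝ E)⁻¹ * ∫ x, exp (-(p * ‖x‖)) ∂μ) := by
  simp only [abs_mul_exp_neg_rpow, integral_const_mul]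
  rw [integral_comp_mul_norm μ (fun t => exp (-(p * t))) hε]

theorem integral_norm_fderiv_mul_exp_neg_mul_norm_rpow_le [InnerProductSpace ℝ E]
    (μ : Measure E) [NullSingletonClass μ] (B : ℝ) {ε p : ℝ} (hε : 0 ≤ ε) (hp : 0 ≤ p)
    (hint : Integrable (fun x => |B * exp (-(ε * ‖x‖))| ^ p) μ) :
    ∫ x, ‖fderiv ℝ (fun y : E => B * exp (-(ε * ‖y‖))) x‖ ^ p ∂μ
      ≤ ε ^ p * ∫ x, |B * exp (-(ε * ‖x‖))| ^ p ∂μ := by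
  rw [← integral_const_mul]
  refine integral_mono_of_nonneg (ae_of_all _ fun x => by positivity) (hint.const_mul _) ?_
  filter_upwards [compl_mem_ae_iff.mpr (measure_singleton (μ := μ) 0)] with x hx
  rw [← mul_rpow hε (abs_nonneg _)]
  exact rpow_le_rpow (norm_nonneg _) (norm_fderiv_mul_exp_neg_mul_norm_le B hε hx) hp

theorem mul_measureReal_ball_le_setIntegral_abs_mul_exp_neg_mul_norm_rpow [BorelSpace E]
    [ProperSpace E] (μ : Measure E) [IsFiniteMeasureOnCompacts μ] (B : ℝ) {ε p δ : ℝ}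
    (hε : 0 ≤ ε) (hp : 0 ≤ p)
    (hint : IntegrableOn (fun x => |B * exp (-(ε * ‖x‖))| ^ p) (ball 0 δ) μ) :
    |B| ^ p * exp (-(p * (ε * δ))) * μ.real (ball 0 δ)
      ≤ ∫ x in ball 0 δ, |B * exp (-(ε * ‖x‖))| ^ p ∂μ := by
  refine setIntegral_ge_of_const_le_real measurableSet_ball measure_ball_lt_top.ne
    (fun x hx => ?_) hint
  have hxδ : ‖x‖ ≤ δ := (mem_ball_zero_iff.mp hx).le
  rw [abs_mul_exp_neg_rpow]
  gcongr

end Integrals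

theorem test_function_subcritical_general (N : ℕ) (p δ η a : ℝ) (hN : 1 ≤ N) (hNp : (N : ℝ) < p)
    (hδ : 0 < δ) (hη : 0 < η) (ha : 0 < a) (A : ℝ → ℝ)
    (hA : ∀ ε, 0 < ε → 0 < A ε ∧
      (∫ x : EuclideanSpace ℝ (Fin N), |A ε * Real.exp (-(ε * ‖x‖))| ^ p) = a ^ p) :
    ∃ ε₀ > 0, ∀ ε, 0 < ε → ε < ε₀ →
      (∫ x : EuclideanSpace ℝ (Fin N),
          ‖fderiv ℝ (fun y : EuclideanSpace ℝ (Fin N) => A ε * Real.exp (-(ε * ‖y‖))) x‖ ^ p)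
        - η * (∫ x in Metric.ball (0 : EuclideanSpace ℝ (Fin N)) δ,
            |A ε * Real.exp (-(ε * ‖x‖))| ^ p) < 0 := by
  -- makes `volume` atomless
  have : Nonempty (Fin N) := Fin.pos_iff_nonempty.mp hN
  have hp : 0 < p := (Nat.cast_nonneg N).trans_lt hNp
  set I := ∫ y : EuclideanSpace ℝ (Fin N), exp (-(p * ‖y‖))
  set V := volume.real (ball (0 : EuclideanSpace ℝ (Fin N)) δ)
  have hV : 0 < V := ENNReal.toReal_pos (measure_ball_pos _ _ hδ).ne' measure_ball_lt_top.ne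
  obtain ⟨ε₀, hε₀, hsmall⟩ := mem_nhdsGT_iff_exists_Ioo_subset.mp
    (eventually_rpow_mul_lt_mul_exp (sub_pos.mpr hNp) I (mul_pos hη hV) p δ)
  refine ⟨ε₀, hε₀, fun ε hε hεε₀ => sub_neg.mpr ?_⟩
  obtain ⟨hA_pos, hA_norm⟩ := hA ε hε
  -- the normalization `= a ^ p ≠ 0` rules out the junk value of a non-integrable integral
  have hint := Integrable.of_integral_ne_zero (hA_norm ▸ (rpow_pos_of_pos ha p).ne')
  have hgrad := integral_norm_fderiv_mul_exp_neg_mul_norm_rpow_le volume (A ε) hε.le hp.le hint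
  rw [integral_abs_mul_exp_neg_mul_norm_rpow volume _ _ hε.le, finrank_euclideanSpace_fin]
    at hgrad
  have hball := mul_measureReal_ball_le_setIntegral_abs_mul_exp_neg_mul_norm_rpow volume (A ε)
    hε.le hp.le (δ := δ) hint.integrableOn
  have hε_pow : ε ^ p * (ε ^ N)⁻¹ = ε ^ (p - N) := by
    rw [rpow_sub hε, rpow_natCast, div_eq_mul_inv]
  calc _ ≤ ε ^ p * (|A ε| ^ p * ((ε ^ N)⁻¹ * I)) := hgrad
    _ = |A ε| ^ p * (ε ^ (p - N) * I) := by rw [← hε_pow]; ring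
    _ < |A ε| ^ p * (η * V * exp (-(p * (ε * δ)))) :=
        mul_lt_mul_of_pos_left (hsmall ⟨hε, hεε₀⟩) (by positivity)
    _ = η * (|A ε| ^ p * exp (-(p * (ε * δ))) * V) := by ring
    _ ≤ _ := by gcongr

/-- for `N < p`, with `φ_ε(x) = A_ε e^{-ε|x|}` normalized so that
`‖φ_ε‖_p = a`, one has `∫ |∇φ_ε|^p - η ∫_{B_δ(0)} |φ_ε|^p < 0` for all sufficiently
small `ε > 0`. -/
theorem test_function_subcritical (N : ℕ) (p δ η a : ℝ) (hN : 1 ≤ N) (hNp : (N : ℝ) < p)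
    (hp : 1 < p) (hδ : 0 < δ) (hη : 0 < η) (ha : 0 < a) (A : ℝ → ℝ)
    (hA : ∀ ε, 0 < ε → 0 < A ε ∧
      (∫ x : EuclideanSpace ℝ (Fin N), |A ε * Real.exp (-(ε * ‖x‖))| ^ p) = a ^ p) :
    ∃ ε₀ > 0, ∀ ε, 0 < ε → ε < ε₀ →
      (∫ x : EuclideanSpace ℝ (Fin N),
          ‖fderiv ℝ (fun y : EuclideanSpace ℝ (Fin N) => A ε * Real.exp (-(ε * ‖y‖))) x‖ ^ p)
        - η * (∫ x in Metric.ball (0 : EuclideanSpace ℝ (Fin N)) δ,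
            |A ε * Real.exp (-(ε * ‖x‖))| ^ p) < 0 :=
  test_function_subcritical_general N p δ η a hN hNp hδ hη ha A hA
end

section
/- Let N > p > 1, δ > 0, η > 0 with ηδ^p > N((N-p)/(p-1))^{p-1}. For integer k ≥ 1 define φ_k(x) = A_k ψ_k(|x|) where ψ_k(t) = 1 for t ≤ δ, ψ_k(t) = (1+1/k)δ^{(N-p)/(p-1)}t^{(p-N)/(p-1)} - 1/k for δ < t ≤ (k+1)^{(p-1)/(N-p)}δ, and ψ_k(t)=0 otherwise. Then for k sufficiently large, ∫_{ℝ^N}|∇φ_k|^p dx - η∫_{B_δ(0)}|φ_k|^p dx ≤ ω_N A_k^p δ^{N-p}(N((N-p)/(p-1))^{p-1}(1+1/k)^p - ηδ^p) < 0. -/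
open MeasureTheory

/-- The test function `φ_k = A_k ψ_k(|x|)` for the case `N > p`. -/
noncomputable def phiPow (N : ℕ) (p δ : ℝ) (A : ℕ → ℝ) (k : ℕ)
    (x : EuclideanSpace ℝ (Fin N)) : ℝ :=
  A k * (if ‖x‖ ≤ δ then 1
    else if ‖x‖ ≤ ((k : ℝ) + 1) ^ ((p - 1) / ((N : ℝ) - p)) * δ then
      (1 + 1 / (k : ℝ)) * δ ^ (((N : ℝ) - p) / (p - 1)) * ‖x‖ ^ ((p - (N : ℝ)) / (p - 1))
        - 1 / (k : ℝ)
    else 0)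

/-! The function is the constant `A_k` on `B_δ`, so the potential term is exactly
`η ω_N A_k^p δ^N`. Its gradient lives on the annulus `δ < |x| < R_k`, where
`|∇φ_k| = A_k (1 + 1/k) δ^q q |x|^(-q-1)` with `q = (N-p)/(p-1)`; integrating in polar
coordinates over all of `|x| > δ` instead of the annulus bounds the Dirichlet energy by
`N ω_N A_k^p (1 + 1/k)^p q^(p-1) δ^(N-p)`. As `(1 + 1/k)^p → 1`, the hypothesis on `η δ^p`
makes the bracket negative for large `k`. -/

open Set Metric Filter Topology Module

noncomputable def truncPowProfile (δ R c α b t : ℝ) : ℝ :=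
  if t ≤ δ then 1 else if t ≤ R then c * t ^ α - b else 0

theorem hasDerivAt_truncPowProfile {δ R c α b t : ℝ} (hδ : 0 ≤ δ) (htδ : t ≠ δ)
    (htR : t ≠ R) :
    HasDerivAt (truncPowProfile δ R c α b)
      ((Ioo δ R).indicator (fun s => c * (α * s ^ (α - 1))) t) t := by
  rcases htδ.lt_or_gt with hlt | hgt
  · have hconst : truncPowProfile δ R c α b =ᶠ[𝓝 t] fun _ => 1 := by
      filter_upwards [Iio_mem_nhds hlt] with s hs
      simp [truncPowProfile, (mem_Iio.mp hs).le]
    rw [indicator_of_notMem fun h => hlt.not_gt h.1]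
    exact (hasDerivAt_const t 1).congr_of_eventuallyEq hconst
  rcases htR.lt_or_gt with hltR | hgtR
  · have hpow : truncPowProfile δ R c α b =ᶠ[𝓝 t] fun s => c * s ^ α - b := by
      filter_upwards [Ioo_mem_nhds hgt hltR] with s hs
      simp [truncPowProfile, not_le.mpr hs.1, hs.2.le]
    rw [indicator_of_mem (mem_Ioo.mpr ⟨hgt, hltR⟩)]
    exact (((Real.hasDerivAt_rpow_const (Or.inl (hδ.trans_lt hgt).ne')).const_mul c).sub_const
      b).congr_of_eventuallyEq hpow
  · have hzero : truncPowProfile δ R c α b =ᶠ[𝓝 t] fun _ => 0 := by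
      filter_upwards [Ioi_mem_nhds (max_lt hgt hgtR)] with s hs
      obtain ⟨hsδ, hsR⟩ := max_lt_iff.mp (mem_Ioi.mp hs)
      simp [truncPowProfile, not_le.mpr hsδ, not_le.mpr hsR]
    rw [indicator_of_notMem fun h => hgtR.not_gt h.2]
    exact (hasDerivAt_const t 0).congr_of_eventuallyEq hzero

section Radial

variable {E : Type*} [NormedAddCommGroup E] [InnerProductSpace ℝ E] [Nontrivial E]

theorem HasDerivAt.norm_fderiv_comp_norm {f : ℝ → ℝ} {f' : ℝ} {x : E}
    (hf : HasDerivAt f f' ‖x‖) (hx : x ≠ 0) :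
    ‖fderiv ℝ (fun y => f ‖y‖) x‖ = |f'| := by
  have hnorm : DifferentiableAt ℝ (‖·‖) x :=
    (contDiffAt_norm ℝ (n := 1) hx).differentiableAt one_ne_zero
  have hcomp : HasFDerivAt (fun y => f ‖y‖) (f' • fderiv ℝ (‖·‖) x) x :=
    hf.comp_hasFDerivAt x hnorm.hasFDerivAt
  rw [hcomp.fderiv, norm_smul, norm_fderiv_norm hnorm, mul_one, Real.norm_eq_abs]

variable [FiniteDimensional ℝ E] [MeasurableSpace E] [BorelSpace E]
  (μ : Measure E) [μ.IsAddHaarMeasure]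

theorem ae_norm_notMem_of_countable {s : Set ℝ} (hs : s.Countable) :
    ∀ᵐ x ∂μ, ‖x‖ ∉ s := by
  have hsphere : {x : E | ‖x‖ ∈ s} = ⋃ r ∈ s, sphere 0 r := by ext; simp
  refine (measure_eq_zero_iff_ae_notMem (s := {x : E | ‖x‖ ∈ s})).mp ?_
  rw [hsphere, measure_biUnion_null_iff hs]
  exact fun r _ => Measure.addHaar_sphere μ 0 r

theorem integral_indicator_Ioo_norm_rpow_le {s δ R : ℝ} (hδ : 0 < δ)
    (hs : finrank ℝ E + s < 0) :
    ∫ x, (Ioo δ R).indicator (fun t => t ^ s) ‖x‖ ∂μ ≤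
      finrank ℝ E * μ.real (ball 0 1) *
        (δ ^ (finrank ℝ E + s) / -(finrank ℝ E + s)) := by
  set n := finrank ℝ E
  have hn : ((n - 1 : ℕ) : ℝ) = n - 1 := by
    rw [Nat.cast_sub finrank_pos, Nat.cast_one]
  have hradial : ∀ t ∈ Ioi (0 : ℝ), t ^ (n - 1) • (Ioo δ R).indicator (fun t => t ^ s) t
      = (Ioo δ R).indicator (fun t => t ^ (n - 1 + s)) t := by
    intro t ht
    by_cases htI : t ∈ Ioo δ R
    · rw [indicator_of_mem htI, indicator_of_mem htI, smul_eq_mul, ← Real.rpow_natCast, hn,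
        Real.rpow_add ht]
    · simp [indicator_of_notMem htI]
  have hexp : (n : ℝ) - 1 + s < -1 := by linarith
  have hle : ∫ t in Ioi 0, (Ioo δ R).indicator (fun t => t ^ (n - 1 + s)) t
      ≤ ∫ t in Ioi δ, t ^ (n - 1 + s) := by
    rw [setIntegral_indicator measurableSet_Ioo,
      inter_eq_self_of_subset_right (Ioo_subset_Ioi_self.trans (Ioi_subset_Ioi hδ.le))]
    refine setIntegral_mono_set (integrableOn_Ioi_rpow_of_lt hexp hδ) ?_
      Ioo_subset_Ioi_self.eventuallyLE
    filter_upwards [self_mem_ae_restrict measurableSet_Ioi] with t ht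
    exact Real.rpow_nonneg (hδ.trans ht).le _
  rw [integral_Ioi_rpow_of_lt hexp hδ] at hle
  have hω : 0 ≤ (n : ℝ) * μ.real (ball 0 1) := by positivity
  calc _ ≤ (n : ℝ) * μ.real (ball 0 1) * (-δ ^ (n - 1 + s + 1) / (n - 1 + s + 1)) := by
        rw [integral_fun_norm_addHaar μ, setIntegral_congr_fun measurableSet_Ioi hradial,
          nsmul_eq_mul, smul_eq_mul, ← mul_assoc]
        exact mul_le_mul_of_nonneg_left hle hω
    _ = _ := by rw [show (n : ℝ) - 1 + s + 1 = n + s by ring, neg_div, div_neg]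

theorem ae_norm_fderiv_truncPowProfile_rpow {δ R c α b a p : ℝ} (hδ : 0 ≤ δ) (hp : 0 < p) :
    ∀ᵐ x ∂μ, ‖fderiv ℝ (fun x => a * truncPowProfile δ R c α b ‖x‖) x‖ ^ p =
      |a * c * α| ^ p * (Ioo δ R).indicator (fun t => t ^ ((α - 1) * p)) ‖x‖ := by
  filter_upwards [ae_norm_notMem_of_countable μ (Set.toFinite {0, δ, R}).countable] with x hx
  simp only [mem_insert_iff, mem_singleton_iff, not_or, norm_eq_zero] at hx
  obtain ⟨hx0, hxδ, hxR⟩ := hx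
  rw [((hasDerivAt_truncPowProfile hδ hxδ hxR).const_mul a).norm_fderiv_comp_norm hx0]
  by_cases hI : ‖x‖ ∈ Ioo δ R
  · have hpow := Real.rpow_nonneg (norm_nonneg x) (α - 1)
    rw [indicator_of_mem hI, indicator_of_mem hI,
      show a * (c * (α * ‖x‖ ^ (α - 1))) = a * c * α * ‖x‖ ^ (α - 1) by ring, abs_mul,
      abs_of_nonneg hpow, Real.mul_rpow (abs_nonneg _) hpow, ← Real.rpow_mul (norm_nonneg x)]
  · simp [indicator_of_notMem hI, Real.zero_rpow hp.ne']

theorem integral_norm_fderiv_truncPowProfile_rpow_le {δ R c α b a p : ℝ} (hδ : 0 < δ)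
    (hp : 0 < p) (hexp : finrank ℝ E + (α - 1) * p < 0) :
    ∫ x, ‖fderiv ℝ (fun x => a * truncPowProfile δ R c α b ‖x‖) x‖ ^ p ∂μ ≤
      |a * c * α| ^ p * (finrank ℝ E * μ.real (ball 0 1) *
        (δ ^ (finrank ℝ E + (α - 1) * p) / -(finrank ℝ E + (α - 1) * p))) := by
  rw [integral_congr_ae (ae_norm_fderiv_truncPowProfile_rpow μ hδ.le hp), integral_const_mul]
  exact mul_le_mul_of_nonneg_left (integral_indicator_Ioo_norm_rpow_le μ hδ hexp) (by positivity)

end Radial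

section PhiPow

variable {N : ℕ} {p δ : ℝ} {A : ℕ → ℝ} {k : ℕ}

theorem phiPow_eq_truncPowProfile :
    phiPow N p δ A k = fun x => A k * truncPowProfile δ
      (((k : ℝ) + 1) ^ ((p - 1) / ((N : ℝ) - p)) * δ)
      ((1 + 1 / (k : ℝ)) * δ ^ (((N : ℝ) - p) / (p - 1))) ((p - (N : ℝ)) / (p - 1))
      (1 / (k : ℝ)) ‖x‖ :=
  rfl

theorem integral_norm_fderiv_phiPow_rpow_le [NeZero N] (hp : 1 < p) (hpN : p < (N : ℝ))
    (hδ : 0 < δ) (hA : 0 < A k) :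
    ∫ x : EuclideanSpace ℝ (Fin N), ‖fderiv ℝ (phiPow N p δ A k) x‖ ^ p
      ≤ (volume (ball (0 : EuclideanSpace ℝ (Fin N)) 1)).toReal * A k ^ p *
          δ ^ ((N : ℝ) - p) *
          ((N : ℝ) * (((N : ℝ) - p) / (p - 1)) ^ (p - 1) * (1 + 1 / (k : ℝ)) ^ p) := by
  set q := ((N : ℝ) - p) / (p - 1) with hq
  have hq0 : 0 < q := div_pos (by linarith) (by linarith)
  have hexp : (N : ℝ) + ((p - N) / (p - 1) - 1) * p = -q := by
    rw [hq]; field_simp [show p - 1 ≠ 0 by linarith]; ring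
  rw [phiPow_eq_truncPowProfile]
  refine (integral_norm_fderiv_truncPowProfile_rpow_le volume (a := A k)
    (c := (1 + 1 / (k : ℝ)) * δ ^ q) (α := (p - N) / (p - 1)) (p := p) hδ (by linarith)
    (by rw [finrank_euclideanSpace_fin, hexp]; linarith)).trans_eq ?_
  rw [finrank_euclideanSpace_fin, hexp, measureReal_def]
  have hcoef : |A k * ((1 + 1 / (k : ℝ)) * δ ^ q) * ((p - N) / (p - 1))|
      = A k * (1 + 1 / (k : ℝ)) * δ ^ q * q := by
    rw [show (p - N) / (p - 1) = -q by rw [hq]; ring, mul_neg, abs_neg,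
      abs_of_pos (by positivity)]
    ring
  have hδpow : (δ ^ q) ^ p = δ ^ ((N : ℝ) - p) * δ ^ q := by
    rw [← Real.rpow_mul hδ.le, ← Real.rpow_add hδ, hq]
    congr 1
    field_simp [show p - 1 ≠ 0 by linarith]
    ring
  have hqpow : q ^ p = q ^ (p - 1) * q := by
    rw [← Real.rpow_add_one hq0.ne', sub_add_cancel]
  rw [hcoef, neg_neg, Real.mul_rpow (by positivity) hq0.le,
    Real.mul_rpow (by positivity) (by positivity), Real.mul_rpow hA.le (by positivity), hδpow,
    hqpow, Real.rpow_neg hδ.le]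
  field_simp

theorem setIntegral_ball_abs_phiPow_rpow [NeZero N] (hδ : 0 < δ) (hA : 0 < A k) :
    ∫ x in ball (0 : EuclideanSpace ℝ (Fin N)) δ, |phiPow N p δ A k x| ^ p
      = (volume (ball (0 : EuclideanSpace ℝ (Fin N)) 1)).toReal * A k ^ p * δ ^ N := by
  have hconst : EqOn (fun x => |phiPow N p δ A k x| ^ p) (fun _ => A k ^ p) (ball 0 δ) := by
    intro x hx
    simp [phiPow, (mem_ball_zero_iff.mp hx).le, abs_of_pos hA]
  rw [setIntegral_congr_fun measurableSet_ball hconst, setIntegral_const, smul_eq_mul,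
    measureReal_def, Measure.addHaar_ball volume _ hδ.le, finrank_euclideanSpace_fin,
    ENNReal.toReal_mul, ENNReal.toReal_ofReal (by positivity)]
  ring

end PhiPow

theorem test_function_supercritical_general (N : ℕ) (p δ η : ℝ) (hp : 1 < p) (hpN : p < (N : ℝ))
    (hδ : 0 < δ)
    (hηδ : (N : ℝ) * (((N : ℝ) - p) / (p - 1)) ^ (p - 1) < η * δ ^ p)
    (A : ℕ → ℝ) (hA : ∀ k, 0 < A k) :
    ∃ k₀ : ℕ, 1 ≤ k₀ ∧ ∀ k, k₀ ≤ k →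
      ((∫ x : EuclideanSpace ℝ (Fin N), ‖fderiv ℝ (phiPow N p δ A k) x‖ ^ p)
          - η * ∫ x in Metric.ball (0 : EuclideanSpace ℝ (Fin N)) δ, |phiPow N p δ A k x| ^ p
        ≤ (volume (Metric.ball (0 : EuclideanSpace ℝ (Fin N)) 1)).toReal * A k ^ p *
            δ ^ ((N : ℝ) - p) *
            ((N : ℝ) * (((N : ℝ) - p) / (p - 1)) ^ (p - 1) * (1 + 1 / (k : ℝ)) ^ p
              - η * δ ^ p)) ∧
      (volume (Metric.ball (0 : EuclideanSpace ℝ (Fin N)) 1)).toReal * A k ^ p *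
          δ ^ ((N : ℝ) - p) *
          ((N : ℝ) * (((N : ℝ) - p) / (p - 1)) ^ (p - 1) * (1 + 1 / (k : ℝ)) ^ p
            - η * δ ^ p) < 0 := by
  have : NeZero N := ⟨by rintro rfl; norm_num at hpN; linarith⟩
  have hlim : Tendsto (fun k : ℕ => (1 + 1 / (k : ℝ)) ^ p) atTop (𝓝 1) := by
    simpa using ((tendsto_const_nhds (x := (1 : ℝ))).add
      tendsto_one_div_atTop_nhds_zero_nat).rpow_const (Or.inr (by linarith : (0 : ℝ) ≤ p))
  obtain ⟨k₁, hk₁⟩ := eventually_atTop.mp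
    ((tendsto_const_nhds.mul hlim).eventually_lt_const (by simpa using hηδ))
  refine ⟨max k₁ 1, le_max_right _ _, fun k hk => ?_⟩
  have hgap := hk₁ k (le_of_max_le_left hk)
  have hω : 0 < (volume (ball (0 : EuclideanSpace ℝ (Fin N)) 1)).toReal :=
    ENNReal.toReal_pos (measure_ball_pos volume _ one_pos).ne' measure_ball_lt_top.ne
  have hscale : 0 < (volume (ball (0 : EuclideanSpace ℝ (Fin N)) 1)).toReal * A k ^ p *
      δ ^ ((N : ℝ) - p) := by
    have := Real.rpow_pos_of_pos (hA k) p
    positivity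
  have hδN : δ ^ N = δ ^ ((N : ℝ) - p) * δ ^ p := by
    rw [← Real.rpow_add hδ, sub_add_cancel, Real.rpow_natCast]
  refine ⟨?_, mul_neg_of_pos_of_neg hscale (by linarith)⟩
  rw [setIntegral_ball_abs_phiPow_rpow hδ (hA k), hδN]
  linear_combination integral_norm_fderiv_phiPow_rpow_le hp hpN hδ (hA k)

/-- for `N > p > 1` and `ηδ^p > N((N-p)/(p-1))^{p-1}`, the truncated
power test functions satisfy, for all sufficiently large `k`,
`∫|∇φ_k|^p - η∫_{B_δ}|φ_k|^p ≤ ω_N A_k^p δ^{N-p}(N((N-p)/(p-1))^{p-1}(1+1/k)^p - ηδ^p) < 0`. -/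
theorem test_function_supercritical (N : ℕ) (p δ η : ℝ) (hp : 1 < p) (hpN : p < (N : ℝ))
    (hδ : 0 < δ) (hη : 0 < η)
    (hηδ : (N : ℝ) * (((N : ℝ) - p) / (p - 1)) ^ (p - 1) < η * δ ^ p)
    (A : ℕ → ℝ) (hA : ∀ k, 0 < A k) :
    ∃ k₀ : ℕ, 1 ≤ k₀ ∧ ∀ k, k₀ ≤ k →
      ((∫ x : EuclideanSpace ℝ (Fin N), ‖fderiv ℝ (phiPow N p δ A k) x‖ ^ p)
          - η * ∫ x in Metric.ball (0 : EuclideanSpace ℝ (Fin N)) δ, |phiPow N p δ A k x| ^ p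
        ≤ (volume (Metric.ball (0 : EuclideanSpace ℝ (Fin N)) 1)).toReal * A k ^ p *
            δ ^ ((N : ℝ) - p) *
            ((N : ℝ) * (((N : ℝ) - p) / (p - 1)) ^ (p - 1) * (1 + 1 / (k : ℝ)) ^ p
              - η * δ ^ p)) ∧
      (volume (Metric.ball (0 : EuclideanSpace ℝ (Fin N)) 1)).toReal * A k ^ p *
          δ ^ ((N : ℝ) - p) *
          ((N : ℝ) * (((N : ℝ) - p) / (p - 1)) ^ (p - 1) * (1 + 1 / (k : ℝ)) ^ p
            - η * δ ^ p) < 0 :=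
  test_function_supercritical_general N p δ η hp hpN hδ hηδ A hA
end

section
/- Let θ ∈ (0,1) and m_a > 0. Suppose real numbers E₀ and β₁, μ ≥ 0 satisfy μ^p + β₁^p ≤ a^p (a > 0), E₀ ≥ -θ m_a (μ/a)^p, and the quantity Σ ≥ m_a (β₁/a)^{-pθ} with 0 < β₁ ≤ a. Then E₀ + Σ ≥ m_a. -/
/-!
With `x = (β₁/a)^p`, the constraint `μ^p + β₁^p ≤ a^p` gives `(μ/a)^p ≤ 1 - x`, while the tangent
line of the convex function `x ↦ x^(-θ)` at `1` gives `Σ ≥ m x^(-θ) ≥ m (1 + θ (1 - x))`. So the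
gain `θ m (1 - x)` in `Σ` covers the loss `θ m (μ/a)^p` in `E₀`.
-/

open Real

lemma one_add_mul_one_sub_le_rpow_neg {x θ : ℝ} (hx : 0 < x) (hθ : 0 ≤ θ) :
    1 + θ * (1 - x) ≤ x ^ (-θ) :=
  calc 1 + θ * (1 - x) ≤ -θ * log x + 1 := by
        linarith [mul_le_mul_of_nonneg_left (log_le_sub_one_of_pos hx) hθ]
    _ ≤ exp (-θ * log x) := add_one_le_exp _
    _ = x ^ (-θ) := by rw [rpow_def_of_pos hx, mul_comm]

lemma div_rpow_add_div_rpow_le_one {p a μ β : ℝ} (ha : 0 < a) (hμ : 0 ≤ μ) (hβ : 0 ≤ β)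
    (h : μ ^ p + β ^ p ≤ a ^ p) : (μ / a) ^ p + (β / a) ^ p ≤ 1 := by
  rw [div_rpow hμ ha.le, div_rpow hβ ha.le, ← add_div, div_le_one (rpow_pos_of_pos ha p)]
  exact h

theorem splitting_energy_comparison_general (p θ m a μ β₁ E₀ Sg : ℝ)
    (hθ0 : 0 < θ) (hm : 0 < m) (ha : 0 < a)
    (hμ : 0 ≤ μ) (hβ0 : 0 < β₁)
    (hsum : μ ^ p + β₁ ^ p ≤ a ^ p)
    (hE : -θ * m * (μ / a) ^ p ≤ E₀)
    (hS : m * (β₁ / a) ^ (-(p * θ)) ≤ Sg) :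
    m ≤ E₀ + Sg := by
  set x := (β₁ / a) ^ p
  have hsplit : (μ / a) ^ p ≤ 1 - x := by
    linarith [div_rpow_add_div_rpow_le_one ha hμ hβ0.le hsum]
  have hSx : m * (1 + θ * (1 - x)) ≤ Sg :=
    calc m * (1 + θ * (1 - x)) ≤ m * x ^ (-θ) :=
          mul_le_mul_of_nonneg_left (one_add_mul_one_sub_le_rpow_neg (by positivity) hθ0.le) hm.le
      _ = m * (β₁ / a) ^ (-(p * θ)) := by rw [← rpow_mul (by positivity), mul_neg]
      _ ≤ Sg := hS
  linarith [mul_le_mul_of_nonneg_left hsplit (mul_nonneg hθ0.le hm.le)]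

/-- splitting-energy comparison. If `θ ∈ (0,1)`, `m > 0`, `a > 0`,
`μ ≥ 0`, `0 < β₁ ≤ a`, `μ^p + β₁^p ≤ a^p`, `E₀ ≥ -θ m (μ/a)^p` and
`Σ ≥ m (β₁/a)^{-pθ}`, then `E₀ + Σ ≥ m`. -/
theorem splitting_energy_comparison (p θ m a μ β₁ E₀ Sg : ℝ)
    (hp : 1 < p) (hθ0 : 0 < θ) (hθ1 : θ < 1) (hm : 0 < m) (ha : 0 < a)
    (hμ : 0 ≤ μ) (hβ0 : 0 < β₁) (hβa : β₁ ≤ a)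
    (hsum : μ ^ p + β₁ ^ p ≤ a ^ p)
    (hE : -θ * m * (μ / a) ^ p ≤ E₀)
    (hS : m * (β₁ / a) ^ (-(p * θ)) ≤ Sg) :
    m ≤ E₀ + Sg :=
  splitting_energy_comparison_general p θ m a μ β₁ E₀ Sg hθ0 hm ha hμ hβ0 hsum hE hS
end
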